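/- arXiv:1905.02605 — 11 statements merged into one kernel-verified Lean document; each statement's English description precedes it below -/
import Mathlib

section
/- For every z > 0 with z ≠ 1, K > 0, and N > 1, the vector with components n̄_ℓ = (K z^M + z^ℓ (z - 1 - K)) / (K z^N + z - 1 - K) for ℓ = 1, ..., M (with M = N+1) is an equilibrium of the modified Becker–Döring system: all fluxes J_ℓ = n̄_ℓ n̄_1 - n̄_{ℓ+1} are equal to the common value J = (z² - z)(1 - α) where α = (z - 1 - K)/(K z^N + z - 1 - K), and J = K n̄_M. -/
/-!
Write `D = K z^N + z - 1 - K`. The numerator of `n̄₁` is `z D`, so `n̄₁ = z`, and then every flux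
`z n̄_ℓ - n̄_{ℓ+1}` telescopes to `K (z - 1) z^(N+1) / D`, independently of `ℓ`; so do `J` and
`K n̄_M`. The only analytic input is `D ≠ 0`: since `z^N - 1` and `z - 1` have the same sign,
`D (z - 1) = K (z^N - 1)(z - 1) + (z - 1)^2 > 0`.
-/

namespace BeckerDoring

noncomputable def denom (K z : ℝ) (N : ℕ) : ℝ := K * z ^ N + z - 1 - K

noncomputable def equilibrium (K z : ℝ) (N ℓ : ℕ) : ℝ :=
  (K * z ^ (N + 1) + z ^ ℓ * (z - 1 - K)) / denom K z N

noncomputable def equilibriumFlux (K z : ℝ) (N : ℕ) : ℝ :=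
  K * (z - 1) * z ^ (N + 1) / denom K z N

lemma pow_sub_one_mul_sub_one_nonneg {z : ℝ} (hz : 0 ≤ z) (N : ℕ) :
    0 ≤ (z ^ N - 1) * (z - 1) := by
  rw [← geom_sum_mul, mul_assoc, ← sq]
  exact mul_nonneg (Finset.sum_nonneg fun i _ => pow_nonneg hz i) (sq_nonneg _)

lemma denom_ne_zero {K z : ℝ} (hK : 0 < K) (hz : 0 < z) (hz1 : z ≠ 1) (N : ℕ) :
    denom K z N ≠ 0 := by
  have hpos : 0 < denom K z N * (z - 1) := by
    have := pow_sub_one_mul_sub_one_nonneg hz.le N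
    have : 0 < (z - 1) ^ 2 := sq_pos_of_ne_zero (sub_ne_zero.mpr hz1)
    unfold denom
    nlinarith
  exact left_ne_zero_of_mul hpos.ne'

lemma mul_equilibrium_last (K z : ℝ) (N : ℕ) :
    K * equilibrium K z N (N + 1) = equilibriumFlux K z N := by
  rw [equilibrium, equilibriumFlux, denom]
  ring

section

variable {K z : ℝ} {N : ℕ}

lemma equilibrium_one (hD : denom K z N ≠ 0) : equilibrium K z N 1 = z := by
  rw [equilibrium, div_eq_iff hD, denom]
  ring

lemma equilibrium_flux (hD : denom K z N ≠ 0) (ℓ : ℕ) :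
    equilibrium K z N ℓ * equilibrium K z N 1 - equilibrium K z N (ℓ + 1) =
      equilibriumFlux K z N := by
  rw [equilibrium_one hD, equilibrium, equilibrium, equilibriumFlux]
  field_simp
  ring

lemma equilibriumFlux_eq (hD : denom K z N ≠ 0) :
    (z ^ 2 - z) * (1 - (z - 1 - K) / denom K z N) = equilibriumFlux K z N := by
  rw [equilibriumFlux]
  field_simp
  rw [denom]
  ring

end

end BeckerDoring

open BeckerDoring

theorem equilibria_formula_general
    (N : ℕ) (M : ℕ) (hM : M = N + 1)
    (K z : ℝ) (hK : 0 < K) (hz : 0 < z) (hz1 : z ≠ 1)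
    (α J : ℝ)
    (hα : α = (z - 1 - K) / (K * z ^ N + z - 1 - K))
    (hJ : J = (z ^ 2 - z) * (1 - α))
    (nbar : ℕ → ℝ)
    (hn : ∀ ℓ, nbar ℓ = (K * z ^ M + z ^ ℓ * (z - 1 - K)) / (K * z ^ N + z - 1 - K)) :
    (∀ ℓ, 1 ≤ ℓ → ℓ ≤ N → nbar ℓ * nbar 1 - nbar (ℓ + 1) = J) ∧ J = K * nbar M := by
  subst hM hα hJ
  obtain rfl : nbar = equilibrium K z N := funext hn
  have hD := denom_ne_zero hK hz hz1 N
  rw [← denom, equilibriumFlux_eq hD, mul_equilibrium_last]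
  exact ⟨fun ℓ _ _ => equilibrium_flux hD ℓ, rfl⟩

/-- The explicit family of equilibria of the modified Becker–Döring system. -/
theorem equilibria_formula
    (N : ℕ) (hN : 1 < N) (M : ℕ) (hM : M = N + 1)
    (K z : ℝ) (hK : 0 < K) (hz : 0 < z) (hz1 : z ≠ 1)
    (α J : ℝ)
    (hα : α = (z - 1 - K) / (K * z ^ N + z - 1 - K))
    (hJ : J = (z ^ 2 - z) * (1 - α))
    (nbar : ℕ → ℝ)
    (hn : ∀ ℓ, nbar ℓ = (K * z ^ M + z ^ ℓ * (z - 1 - K)) / (K * z ^ N + z - 1 - K)) :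
    (∀ ℓ, 1 ≤ ℓ → ℓ ≤ N → nbar ℓ * nbar 1 - nbar (ℓ + 1) = J) ∧ J = K * nbar M :=
  equilibria_formula_general N M hM K z hK hz hz1 α J hα hJ nbar hn
end

section
/- The row vector m = (1, 2, ..., M) is a left null vector of the matrix B, i.e., m B = 0. Consequently, if B V = λ V with λ ≠ 0, then Σ_{ℓ=1}^M ℓ V_ℓ = 0. -/
/-!
Summation by parts. With `a ℓ = ℓ V_{ℓ-1}` and `b ℓ = (ℓ - 1) V_ℓ`, the weighted interior row is
`ℓ (BV)_ℓ = (b (ℓ+1) - b ℓ) - (K+1) (a (ℓ+1) - a ℓ) + K V_ℓ`. Summed over `2 ≤ ℓ ≤ N` the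
differences telescope, and what remains (boundary values and `K ∑ V_ℓ`) is cancelled exactly by
the first row plus `M` times the last row. Pairing `m B = 0` with `BV = λV` gives `λ (m · V) = 0`.
-/

/-- The action of the linearization matrix `B` on a vector, indexed by `1, …, M = N+1`. -/
noncomputable def applyB (K : ℝ) (N : ℕ) (V : ℕ → ℂ) (ℓ : ℕ) : ℂ :=
  if ℓ = 1 then
    -((K : ℂ) + 1) * ((N : ℂ) + 3) * V 1 + V 2 - (K : ℂ) * ∑ j ∈ Finset.Icc 2 N, V j
      + (((N : ℂ) + 1) * (K : ℂ) + 1) * V (N + 1)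
  else if ℓ = N + 1 then
    ((K : ℂ) + 1) * (V 1 + V N - V (N + 1))
  else if 2 ≤ ℓ ∧ ℓ ≤ N then
    (K : ℂ) * (V (ℓ - 1) - V ℓ) + (V (ℓ - 1) - 2 * V ℓ + V (ℓ + 1))
  else 0

namespace applyB

variable (K : ℝ) (N : ℕ) (V : ℕ → ℂ)

theorem apply_one :
    applyB K N V 1 = -((K : ℂ) + 1) * ((N : ℂ) + 3) * V 1 + V 2
      - (K : ℂ) * ∑ j ∈ Finset.Icc 2 N, V j + (((N : ℂ) + 1) * (K : ℂ) + 1) * V (N + 1) :=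
  if_pos rfl

theorem apply_last (hN : 1 ≤ N) :
    applyB K N V (N + 1) = ((K : ℂ) + 1) * (V 1 + V N - V (N + 1)) := by
  rw [applyB, if_neg (by omega), if_pos rfl]

theorem natCast_mul_apply_of_mem_Icc {ℓ : ℕ} (hℓ : ℓ ∈ Finset.Icc 2 N) :
    (ℓ : ℂ) * applyB K N V ℓ
      = ((((ℓ + 1 : ℕ) : ℂ) - 1) * V (ℓ + 1) - ((ℓ : ℂ) - 1) * V ℓ)
        - ((K : ℂ) + 1) * (((ℓ + 1 : ℕ) : ℂ) * V ℓ - (ℓ : ℂ) * V (ℓ - 1))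
        + (K : ℂ) * V ℓ := by
  rw [Finset.mem_Icc] at hℓ
  rw [applyB, if_neg (by omega), if_neg (by omega), if_pos hℓ]
  push_cast
  ring

theorem sum_Icc_natCast_mul_apply (hN : 2 ≤ N) :
    ∑ ℓ ∈ Finset.Icc 2 N, (ℓ : ℂ) * applyB K N V ℓ
      = ((N : ℂ) * V (N + 1) - V 2) - ((K : ℂ) + 1) * (((N : ℂ) + 1) * V N - 2 * V 1)
        + (K : ℂ) * ∑ ℓ ∈ Finset.Icc 2 N, V ℓ := by
  have hright := Finset.sum_Icc_sub hN fun ℓ => ((ℓ : ℂ) - 1) * V ℓ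
  have hleft := Finset.sum_Icc_sub hN fun ℓ => (ℓ : ℂ) * V (ℓ - 1)
  simp only [Nat.add_sub_cancel] at hleft
  rw [Finset.sum_congr rfl fun ℓ hℓ => natCast_mul_apply_of_mem_Icc K N V hℓ,
    Finset.sum_add_distrib, Finset.sum_sub_distrib, ← Finset.mul_sum, ← Finset.mul_sum,
    hright, hleft]
  push_cast
  ring

theorem sum_natCast_mul_apply_eq_zero (hN : 2 ≤ N) :
    ∑ ℓ ∈ Finset.Icc 1 (N + 1), (ℓ : ℂ) * applyB K N V ℓ = 0 := by
  rw [← Finset.insert_Icc_add_one_left_eq_Icc (by omega), Finset.sum_insert (by simp),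
    Finset.sum_Icc_succ_top (by omega), one_add_one_eq_two, sum_Icc_natCast_mul_apply K N V hN,
    apply_one, apply_last K N V (by omega)]
  push_cast
  ring

theorem sum_natCast_mul_eq_zero_of_eigenvector (hN : 2 ≤ N) {lam : ℂ} (hlam : lam ≠ 0)
    (hV : ∀ ℓ ∈ Finset.Icc 1 (N + 1), applyB K N V ℓ = lam * V ℓ) :
    ∑ ℓ ∈ Finset.Icc 1 (N + 1), (ℓ : ℂ) * V ℓ = 0 := by
  have h : lam * ∑ ℓ ∈ Finset.Icc 1 (N + 1), (ℓ : ℂ) * V ℓ = 0 := by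
    rw [Finset.mul_sum, ← sum_natCast_mul_apply_eq_zero K N V hN]
    exact Finset.sum_congr rfl fun ℓ hℓ => by rw [hV ℓ hℓ]; ring
  exact (mul_eq_zero.mp h).resolve_left hlam

end applyB

theorem left_null_vector_general (N : ℕ) (hN : 2 ≤ N) (K : ℝ) :
    (∀ V : ℕ → ℂ, ∑ ℓ ∈ Finset.Icc 1 (N + 1), (ℓ : ℂ) * applyB K N V ℓ = 0) ∧
    (∀ (V : ℕ → ℂ) (lam : ℂ), lam ≠ 0 →
      (∀ ℓ ∈ Finset.Icc 1 (N + 1), applyB K N V ℓ = lam * V ℓ) →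
      ∑ ℓ ∈ Finset.Icc 1 (N + 1), (ℓ : ℂ) * V ℓ = 0) :=
  ⟨fun V => applyB.sum_natCast_mul_apply_eq_zero K N V hN,
    fun V _ hlam hV => applyB.sum_natCast_mul_eq_zero_of_eigenvector K N V hN hlam hV⟩

/-- The row vector `(1, 2, …, M)` is a left null vector of `B`; consequently any
eigenvector for a nonzero eigenvalue has vanishing total mass. -/
theorem left_null_vector (N : ℕ) (hN : 2 ≤ N) (K : ℝ) (hK : 0 < K) :
    (∀ V : ℕ → ℂ, ∑ ℓ ∈ Finset.Icc 1 (N + 1), (ℓ : ℂ) * applyB K N V ℓ = 0) ∧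
    (∀ (V : ℕ → ℂ) (lam : ℂ), lam ≠ 0 →
      (∀ ℓ ∈ Finset.Icc 1 (N + 1), applyB K N V ℓ = lam * V ℓ) →
      ∑ ℓ ∈ Finset.Icc 1 (N + 1), (ℓ : ℂ) * V ℓ = 0) :=
  left_null_vector_general N hN K
end

section
/- The vector v̄ with components v̄_ℓ = 1 + (A^ℓ - A)/(K A^N) for 1 ≤ ℓ ≤ M satisfies B v̄ = 0, where A = 1+K. -/
/-!
Write `a = 1 + K`. On vectors `V ℓ = α + β a ^ ℓ` the interior rows of `B` vanish identically,
since `a` is a root of the characteristic polynomial `K (1 - x) + (1 - x) ^ 2` of the recursion.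
Summing the geometric series in the first row, both boundary rows reduce to a multiple of
`α + β a - β K a ^ N`, and `v̄` (with `α = 1 - β a`, `β = 1 / (K a ^ N)`) is chosen to kill it.
-/

open Finset

namespace applyB

variable {K : ℝ} {N : ℕ} {V : ℕ → ℂ} {a α β : ℂ}

theorem mul_sum_Icc_two_of_eq_add_pow (hN : 1 ≤ N) (ha : a = K + 1)
    (hV : ∀ ℓ, V ℓ = α + β * a ^ ℓ) :
    (K : ℂ) * ∑ j ∈ Icc 2 N, V j = ((N : ℂ) - 1) * K * α + β * (a ^ (N + 1) - a ^ 2) := by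
  have hgeom : (∑ j ∈ Icc 2 N, a ^ j) * (a - 1) = a ^ (N + 1) - a ^ 2 := by
    rw [← Ico_add_one_right_eq_Icc, geom_sum_Ico_mul a (by omega)]
  have hcard : ((#(Icc 2 N) : ℕ) : ℂ) = N - 1 := by
    rw [Nat.card_Icc, show N + 1 - 2 = N - 1 by omega, Nat.cast_sub hN, Nat.cast_one]
  simp only [hV, sum_add_distrib, sum_const, nsmul_eq_mul, hcard, ← mul_sum]
  rw [← hgeom, ha]
  ring

theorem eq_zero_of_eq_add_pow (hN : 1 ≤ N) (ha : a = K + 1) (hV : ∀ ℓ, V ℓ = α + β * a ^ ℓ)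
    (hαβ : α + β * a = β * K * a ^ N) {ℓ : ℕ} (hℓ : ℓ ∈ Icc 1 (N + 1)) :
    applyB K N V ℓ = 0 := by
  rw [mem_Icc] at hℓ
  subst ha
  rcases eq_or_ne ℓ 1 with rfl | h1
  · rw [applyB, if_pos rfl, mul_sum_Icc_two_of_eq_add_pow hN rfl hV, hV, hV, hV]
    linear_combination (-((N : ℂ) + 1) * (K + 1)) * hαβ
  rcases eq_or_ne ℓ (N + 1) with rfl | hlast
  · rw [applyB, if_neg h1, if_pos rfl, hV, hV, hV]
    linear_combination ((K : ℂ) + 1) * hαβ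
  obtain ⟨m, rfl⟩ : ∃ m, ℓ = m + 1 := ⟨ℓ - 1, by omega⟩
  rw [applyB, if_neg h1, if_neg hlast, if_pos ⟨by omega, by omega⟩, Nat.add_sub_cancel,
    hV, hV, hV]
  ring

end applyB

/-- The vector `v̄_ℓ = 1 + (A^ℓ - A)/(K A^N)` is a right null vector of `B`. -/
theorem right_null_vector (N : ℕ) (hN : 2 ≤ N) (K A : ℝ) (hK : 0 < K) (hA : A = 1 + K)
    (vbar : ℕ → ℂ)
    (hv : ∀ ℓ, vbar ℓ = 1 + ((A : ℂ) ^ ℓ - (A : ℂ)) / ((K : ℂ) * (A : ℂ) ^ N)) :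
    ∀ ℓ ∈ Finset.Icc 1 (N + 1), applyB K N vbar ℓ = 0 := by
  have hA' : (A : ℂ) = K + 1 := by rw [hA]; push_cast; ring
  have hApos : 0 < A := by rw [hA]; positivity
  have hKAN : (K : ℂ) * (A : ℂ) ^ N ≠ 0 :=
    mul_ne_zero (by exact_mod_cast hK.ne') (pow_ne_zero _ (by exact_mod_cast hApos.ne'))
  refine fun ℓ => applyB.eq_zero_of_eq_add_pow (α := 1 - ((K : ℂ) * A ^ N)⁻¹ * A)
    (β := ((K : ℂ) * A ^ N)⁻¹) (by omega) hA' (fun ℓ => by rw [hv]; ring) ?_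
  rw [sub_add_cancel, mul_assoc, inv_mul_cancel₀ hKAN]
end

section
/- For all N > 1 and K > 0, λ = 0 is a simple eigenvalue of the matrix B: the kernel of B is one-dimensional (spanned by v̄ with v̄_ℓ = 1 + (A^ℓ - A)/(K A^N)), and there is no generalized eigenvector V with B V = v̄. -/
lemma telescope_down (t : ℕ → ℂ) (n : ℕ) (hn : 2 ≤ n) :
    ∑ ℓ ∈ Finset.Icc 2 n, (t (ℓ - 1) - t ℓ) = t 1 - t n := by
  induction n, hn using Nat.le_induction with
  | base => simp
  | succ n hn ih =>
      rw [Finset.sum_Icc_succ_top (by omega), ih]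
      have h : n + 1 - 1 = n := by omega
      rw [h]; ring

lemma telescope_up (s : ℕ → ℂ) (n : ℕ) (hn : 2 ≤ n) :
    ∑ ℓ ∈ Finset.Icc 2 n, (s ℓ - s (ℓ - 1)) = s n - s 1 := by
  induction n, hn using Nat.le_induction with
  | base => simp
  | succ n hn ih =>
      rw [Finset.sum_Icc_succ_top (by omega), ih]
      have h : n + 1 - 1 = n := by omega
      rw [h]; ring

/-- `(1, 2, …, N+1)` is a left null vector of `B`. -/
lemma weighted_sum (K : ℝ) (N : ℕ) (hN : 2 ≤ N) (V : ℕ → ℂ) :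
    ∑ ℓ ∈ Finset.Icc 1 (N + 1), (ℓ : ℂ) * applyB K N V ℓ = 0 := by
  have hsplit : Finset.Icc 1 (N + 1) = insert 1 (insert (N + 1) (Finset.Icc 2 N)) := by
    ext x; simp only [Finset.mem_insert, Finset.mem_Icc]; omega
  rw [hsplit, Finset.sum_insert (by simp only [Finset.mem_insert, Finset.mem_Icc]; omega),
    Finset.sum_insert (by simp only [Finset.mem_Icc]; omega)]
  have h1 : applyB K N V 1 =
      -((K : ℂ) + 1) * ((N : ℂ) + 3) * V 1 + V 2 - (K : ℂ) * ∑ j ∈ Finset.Icc 2 N, V j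
      + (((N : ℂ) + 1) * (K : ℂ) + 1) * V (N + 1) := by
    unfold applyB; rw [if_pos rfl]
  have hM : applyB K N V (N + 1) = ((K : ℂ) + 1) * (V 1 + V N - V (N + 1)) := by
    unfold applyB; rw [if_neg (by omega), if_pos rfl]
  have hmid : ∀ ℓ ∈ Finset.Icc 2 N, (ℓ : ℂ) * applyB K N V ℓ =
      (((K : ℂ) + 1) * ((ℓ : ℂ) * V (ℓ - 1) - ((ℓ : ℂ) + 1) * V ℓ)
        + ((ℓ : ℂ) * V (ℓ + 1) - ((ℓ : ℂ) - 1) * V ℓ)) + (K : ℂ) * V ℓ := by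
    intro ℓ hℓ
    simp only [Finset.mem_Icc] at hℓ
    unfold applyB
    rw [if_neg (by omega), if_neg (by omega), if_pos ⟨hℓ.1, hℓ.2⟩]
    ring
  rw [Finset.sum_congr rfl hmid, Finset.sum_add_distrib, Finset.sum_add_distrib]
  have T1 : ∑ ℓ ∈ Finset.Icc 2 N, ((K : ℂ) + 1) * ((ℓ : ℂ) * V (ℓ - 1) - ((ℓ : ℂ) + 1) * V ℓ)
      = ((K : ℂ) + 1) * (2 * V 1 - ((N : ℂ) + 1) * V N) := by
    rw [← Finset.mul_sum]
    congr 1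
    have hts := telescope_down (fun j => ((j : ℂ) + 1) * V j) N hN
    calc ∑ ℓ ∈ Finset.Icc 2 N, ((ℓ : ℂ) * V (ℓ - 1) - ((ℓ : ℂ) + 1) * V ℓ)
        = ∑ ℓ ∈ Finset.Icc 2 N,
            ((((ℓ - 1 : ℕ) : ℂ) + 1) * V (ℓ - 1) - ((ℓ : ℂ) + 1) * V ℓ) := by
          apply Finset.sum_congr rfl
          intro ℓ hℓ
          simp only [Finset.mem_Icc] at hℓ
          rw [Nat.cast_sub (by omega : 1 ≤ ℓ), Nat.cast_one]
          ring
      _ = (((1 : ℕ) : ℂ) + 1) * V 1 - ((N : ℂ) + 1) * V N := hts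
      _ = 2 * V 1 - ((N : ℂ) + 1) * V N := by norm_num
  have T2 : ∑ ℓ ∈ Finset.Icc 2 N, ((ℓ : ℂ) * V (ℓ + 1) - ((ℓ : ℂ) - 1) * V ℓ)
      = (N : ℂ) * V (N + 1) - V 2 := by
    have hts := telescope_up (fun j => (j : ℂ) * V (j + 1)) N hN
    calc ∑ ℓ ∈ Finset.Icc 2 N, ((ℓ : ℂ) * V (ℓ + 1) - ((ℓ : ℂ) - 1) * V ℓ)
        = ∑ ℓ ∈ Finset.Icc 2 N,
            ((ℓ : ℂ) * V (ℓ + 1) - ((ℓ - 1 : ℕ) : ℂ) * V (ℓ - 1 + 1)) := by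
          apply Finset.sum_congr rfl
          intro ℓ hℓ
          simp only [Finset.mem_Icc] at hℓ
          have h : ℓ - 1 + 1 = ℓ := by omega
          rw [h, Nat.cast_sub (by omega : 1 ≤ ℓ), Nat.cast_one]
      _ = (N : ℂ) * V (N + 1) - ((1 : ℕ) : ℂ) * V (1 + 1) := hts
      _ = (N : ℂ) * V (N + 1) - V 2 := by norm_num
  rw [T1, T2, h1, hM, ← Finset.mul_sum]
  push_cast
  ring

/-- Middle rows of the homogeneous/inhomogeneous system force the two-term recurrence. -/
lemma middle_row (K : ℝ) (N : ℕ) (V : ℕ → ℂ) (ℓ : ℕ) (h2 : 2 ≤ ℓ) (hN : ℓ ≤ N) :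
    applyB K N V ℓ = (K : ℂ) * (V (ℓ - 1) - V ℓ) + (V (ℓ - 1) - 2 * V ℓ + V (ℓ + 1)) := by
  unfold applyB
  rw [if_neg (by omega), if_neg (by omega), if_pos ⟨h2, hN⟩]

/-- `λ = 0` is a simple eigenvalue of `B`: the kernel is spanned by `v̄`, and
there is no generalized eigenvector `V` with `B V = v̄`. -/
theorem zero_simple_eigenvalue (N : ℕ) (hN : 2 ≤ N) (K A : ℝ) (hK : 0 < K) (hA : A = 1 + K)
    (vbar : ℕ → ℂ)
    (hv : ∀ ℓ, vbar ℓ = 1 + ((A : ℂ) ^ ℓ - (A : ℂ)) / ((K : ℂ) * (A : ℂ) ^ N)) :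
    (∀ V : ℕ → ℂ, (∀ ℓ ∈ Finset.Icc 1 (N + 1), applyB K N V ℓ = 0) →
      ∃ c : ℂ, ∀ ℓ ∈ Finset.Icc 1 (N + 1), V ℓ = c * vbar ℓ) ∧
    ¬ ∃ V : ℕ → ℂ, ∀ ℓ ∈ Finset.Icc 1 (N + 1), applyB K N V ℓ = vbar ℓ := by
  have hk0 : (K : ℂ) ≠ 0 := Complex.ofReal_ne_zero.mpr (ne_of_gt hK)
  have haK : (A : ℂ) = 1 + (K : ℂ) := by rw [hA]; push_cast; ring
  have ha0 : (A : ℂ) ≠ 0 := by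
    have : (0 : ℝ) < A := by rw [hA]; linarith
    exact Complex.ofReal_ne_zero.mpr (ne_of_gt this)
  have ha1 : (A : ℂ) - 1 ≠ 0 := by
    rw [haK]
    intro h
    apply hk0
    linear_combination h
  have hpowN : (A : ℂ) ^ N ≠ 0 := pow_ne_zero _ ha0
  constructor
  · -- kernel is one-dimensional
    intro V hker
    set a : ℂ := (A : ℂ) with ha_def
    have hrec : ∀ ℓ, 2 ≤ ℓ → ℓ ≤ N → V (ℓ + 1) = (a + 1) * V ℓ - a * V (ℓ - 1) := by
      intro ℓ h2 hℓN
      have h := hker ℓ (by simp [Finset.mem_Icc]; omega)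
      rw [middle_row K N V ℓ h2 hℓN] at h
      rw [haK]
      linear_combination h
    set β : ℂ := (V 2 - V 1) / (a ^ 2 - a) with hβ_def
    set α : ℂ := V 1 - β * a with hα_def
    have haa : a ^ 2 - a ≠ 0 := by
      have : a ^ 2 - a = a * (a - 1) := by ring
      rw [this]
      exact mul_ne_zero ha0 ha1
    have hV1 : V 1 = α + β * a := by rw [hα_def]; ring
    have hV2 : V 2 = α + β * a ^ 2 := by
      have h := div_mul_cancel₀ (V 2 - V 1) haa
      rw [hα_def]
      linear_combination -h
    have key : ∀ ℓ, 1 ≤ ℓ → ℓ ≤ N + 1 → V ℓ = α + β * a ^ ℓ := by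
      intro ℓ
      induction ℓ using Nat.strong_induction_on with
      | _ ℓ ih =>
        match ℓ with
        | 0 => intro h; omega
        | 1 => intro _ _; rw [hV1, pow_one]
        | 2 => intro _ _; rw [hV2]
        | (m + 3) =>
          intro _ hle
          have e1 := ih (m + 2) (by omega) (by omega) (by omega)
          have e2 := ih (m + 1) (by omega) (by omega) (by omega)
          have hr := hrec (m + 2) (by omega) (by omega)
          have hidx : m + 2 - 1 = m + 1 := by omega
          rw [hidx] at hr
          rw [hr, e1, e2]
          ring
    have hrowM := hker (N + 1) (by simp [Finset.mem_Icc])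
    unfold applyB at hrowM
    rw [if_neg (by omega), if_pos rfl] at hrowM
    have hka : (K : ℂ) + 1 ≠ 0 := by
      rw [show (K : ℂ) + 1 = (A : ℂ) by rw [← ha_def, haK]; ring]
      exact ha0
    have hVM : V 1 + V N - V (N + 1) = 0 :=
      (mul_eq_zero.mp hrowM).resolve_left hka
    have eα : α = β * (a ^ (N + 1) - a ^ N - a) := by
      have l1 := key 1 (by omega) (by omega)
      have lN := key N (by omega) (by omega)
      have lM := key (N + 1) (by omega) (by omega)
      rw [l1, lN, lM] at hVM
      rw [pow_one] at hVM
      linear_combination hVM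
    refine ⟨β * (K : ℂ) * a ^ N, ?_⟩
    intro ℓ hℓ
    simp only [Finset.mem_Icc] at hℓ
    rw [key ℓ hℓ.1 hℓ.2, hv ℓ, eα]
    have hk : (K : ℂ) = a - 1 := by rw [haK]; ring
    rw [hk]
    field_simp
    ring
  · -- no generalized eigenvector
    rintro ⟨V, hV⟩
    have hws := weighted_sum K N hN V
    rw [Finset.sum_congr rfl (fun ℓ hℓ => by rw [hV ℓ hℓ])] at hws
    -- the weighted sum of v̄ is a positive real number
    have hterm : ∀ ℓ ∈ Finset.Icc 1 (N + 1), (ℓ : ℂ) * vbar ℓ =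
        ((ℓ * (1 + (A ^ ℓ - A) / (K * A ^ N)) : ℝ) : ℂ) := by
      intro ℓ _
      rw [hv ℓ]
      push_cast
      ring
    rw [Finset.sum_congr rfl hterm, ← Complex.ofReal_sum] at hws
    have hA1 : (1 : ℝ) ≤ A := by rw [hA]; linarith
    have hpos : 0 < ∑ ℓ ∈ Finset.Icc 1 (N + 1), (ℓ * (1 + (A ^ ℓ - A) / (K * A ^ N)) : ℝ) := by
      apply Finset.sum_pos
      · intro ℓ hℓ
        simp only [Finset.mem_Icc] at hℓ
        have hℓ1 : (1 : ℝ) ≤ (ℓ : ℝ) := by exact_mod_cast hℓ.1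
        have hAp : (A : ℝ) ≤ A ^ ℓ := by
          calc (A : ℝ) = A ^ 1 := (pow_one A).symm
          _ ≤ A ^ ℓ := pow_le_pow_right₀ hA1 hℓ.1
        have hden : (0 : ℝ) < K * A ^ N := by positivity
        have : (0 : ℝ) ≤ (A ^ ℓ - A) / (K * A ^ N) := by
          apply div_nonneg (by linarith) (le_of_lt hden)
        nlinarith
      · exact ⟨1, by simp [Finset.mem_Icc]⟩
    exact Complex.ofReal_ne_zero.mpr (ne_of_gt hpos) hws
end

section
/- For any κ > 0, every nonzero complex root of Q(z; κ) = e^z (1 + z²/κ²) - (1 + z) is non-real and simple, i.e., if Q(z) = 0 with z ≠ 0 then z ∉ ℝ and ∂_z Q(z) ≠ 0. -/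
/-!
At a nonzero real root `x` we would have `exp x * (1 + x² / κ²) ≥ exp x > 1 + x`.
Since `Q' = Q + z + 2 z exp z / κ²`, a nonzero double root satisfies `exp z = -κ² / 2`;
substituting into `Q z = 0` gives `(z + 1)² = -(1 + κ²)`, so `z = -1 + b i` with
`b² = 1 + κ²`. Then `|exp z| = exp (-1) = κ² / 2`, so `b² = 1 + 2 / e < π²`,
while `exp z` real forces `sin b = 0`, hence `b = 0`: impossible.
-/

open Complex

lemma Real.one_add_lt_exp_mul_one_add {x t : ℝ} (hx : x ≠ 0) (ht : 0 ≤ t) :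
    1 + x < Real.exp x * (1 + t) :=
  calc 1 + x < Real.exp x := by linarith [Real.add_one_lt_exp hx]
    _ ≤ Real.exp x * (1 + t) := le_mul_of_one_le_right (Real.exp_pos x).le (by linarith)

lemma hasDerivAt_exp_mul_one_add_sq_div_sub (c z : ℂ) :
    HasDerivAt (fun w => exp w * (1 + w ^ 2 / c) - (1 + w))
      (exp z * (1 + z ^ 2 / c) - (1 + z) + z + 2 * z * exp z / c) z := by
  have hquad : HasDerivAt (fun w : ℂ => 1 + w ^ 2 / c) (2 * z / c) z := by
    simpa using ((hasDerivAt_pow 2 z).div_const c).const_add 1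
  refine (((hasDerivAt_exp z).mul hquad).sub ((hasDerivAt_id' z).const_add 1)).congr_deriv ?_
  ring

lemma exp_eq_neg_half_of_add_mul_exp_div_eq_zero {c z : ℂ} (hz : z ≠ 0)
    (h : z + 2 * z * exp z / c = 0) : exp z = -c / 2 := by
  have hunit : 1 + 2 * exp z / c = 0 := by
    refine (mul_eq_zero.mp ?_).resolve_left hz
    linear_combination h
  rcases eq_or_ne c 0 with rfl | hc
  · simp at hunit
  · field_simp at hunit
    linear_combination hunit / 2

lemma add_one_sq_eq_of_exp_eq_neg_half {c z : ℂ} (he : exp z = -c / 2)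
    (hQ : exp z * (1 + z ^ 2 / c) = 1 + z) : (z + 1) ^ 2 = -(1 + c) := by
  have hc : c ≠ 0 := by
    rintro rfl
    simp [exp_ne_zero] at he
  rw [he] at hQ
  field_simp at hQ
  linear_combination -hQ

lemma Complex.re_eq_zero_of_sq_eq_ofReal_neg {w : ℂ} {r : ℝ} (hr : r < 0) (h : w ^ 2 = r) :
    w.re = 0 ∧ w.im ^ 2 = -r := by
  have hre : w.re ^ 2 - w.im ^ 2 = r := by simpa [sq] using congrArg re h
  have him : w.re * w.im = 0 := by
    have := congrArg im h
    simp only [sq, mul_im, ofReal_im] at this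
    linarith
  have hre0 : w.re = 0 := by
    rcases mul_eq_zero.mp him with h2 | h2
    · exact h2
    · nlinarith [sq_nonneg w.re]
  exact ⟨hre0, by simp [hre0] at hre; linarith⟩

lemma exp_ne_neg_half_sq_of_add_one_sq_eq (κ : ℝ) {z : ℂ} (hsq : (z + 1) ^ 2 = -(1 + κ ^ 2)) :
    exp z ≠ -(κ : ℂ) ^ 2 / 2 := by
  intro he
  obtain ⟨hre, him⟩ := re_eq_zero_of_sq_eq_ofReal_neg (r := -(1 + κ ^ 2))
    (by nlinarith [sq_nonneg κ]) (by push_cast; exact hsq)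
  simp only [add_re, one_re, add_im, one_im, add_zero, neg_neg] at hre him
  have hκ : κ ^ 2 = 2 * Real.exp (-1) := by
    have := congrArg norm he
    rw [norm_exp, show z.re = -1 by linarith] at this
    simp [← ofReal_pow] at this
    linarith
  have hsin : Real.sin z.im = 0 := by
    have := congrArg im he
    rw [exp_im] at this
    simpa [← ofReal_pow, Real.exp_ne_zero] using this
  have hlt : z.im ^ 2 < Real.pi ^ 2 := by
    nlinarith [Real.exp_lt_one_iff.mpr (show (-1 : ℝ) < 0 by norm_num), Real.pi_gt_three]
  have hb : z.im = 0 := by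
    obtain ⟨h1, h2⟩ := abs_lt_of_sq_lt_sq' hlt Real.pi_pos.le
    exact (Real.sin_eq_zero_iff_of_lt_of_lt h1 h2).mp hsin
  nlinarith [sq_nonneg κ]

theorem Q_nonzero_roots_simple_general (κ : ℝ)
    (Q : ℂ → ℂ)
    (hQ : ∀ z : ℂ, Q z = Complex.exp z * (1 + z ^ 2 / (κ : ℂ) ^ 2) - (1 + z)) :
    ∀ z : ℂ, z ≠ 0 → Q z = 0 → z.im ≠ 0 ∧ deriv Q z ≠ 0 := by
  intro z hz hQz
  rw [hQ, sub_eq_zero] at hQz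
  refine ⟨fun him => ?_, fun hQ' => ?_⟩
  · obtain ⟨x, rfl⟩ : ∃ x : ℝ, z = x := ⟨z.re, ext rfl (by simpa using him)⟩
    have hx : x ≠ 0 := by exact_mod_cast hz
    have hreal : Real.exp x * (1 + x ^ 2 / κ ^ 2) = 1 + x := by exact_mod_cast hQz
    exact (Real.one_add_lt_exp_mul_one_add hx (by positivity)).ne' hreal
  · rw [funext hQ, (hasDerivAt_exp_mul_one_add_sq_div_sub _ z).deriv, hQz, sub_self,
      zero_add] at hQ'
    have he := exp_eq_neg_half_of_add_mul_exp_div_eq_zero hz hQ'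
    exact exp_ne_neg_half_sq_of_add_one_sq_eq κ (add_one_sq_eq_of_exp_eq_neg_half he hQz) he

/-- Every nonzero complex root of `Q(z;κ)` is non-real and simple. -/
theorem Q_nonzero_roots_simple (κ : ℝ) (hκ : 0 < κ)
    (Q : ℂ → ℂ)
    (hQ : ∀ z : ℂ, Q z = Complex.exp z * (1 + z ^ 2 / (κ : ℂ) ^ 2) - (1 + z)) :
    ∀ z : ℂ, z ≠ 0 → Q z = 0 → z.im ≠ 0 ∧ deriv Q z ≠ 0 :=
  Q_nonzero_roots_simple_general κ Q hQ
end

section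
/- Let t ≠ 0 be real and κ > 0. Then z = it is a root of Q(z; κ) = e^z (1 + z²/κ²) - (1 + z) if and only if cos t < 0, tan t = t, and κ² = t²/(1 - sec t) = √(1 + t²) - 1. -/
/-!
Write `a = 1 - t² / κ²`, a real number `< 1` because `t ≠ 0`. Then `Q(it) = 0` says
`e^{it} a = 1 + it`, i.e. `a cos t = 1` and `a sin t = t`. Taking moduli gives `a² = 1 + t²`, and
`a < 1` forces `a = -√(1 + t²)`; hence `cos t = -1/√(1 + t²) < 0` and `tan t = t`. Conversely
`cos t < 0` and `tan t = t` determine `cos t = -1/√(1 + t²)`, and `a = -√(1 + t²)` is the same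
as `κ² = √(1 + t²) - 1 = t² / (1 + √(1 + t²)) = t² / (1 - sec t)`.
-/

open Real

namespace Real

lemma sin_eq_mul_cos_of_tan_eq_self {t : ℝ} (hc : cos t ≠ 0) (h : tan t = t) :
    sin t = t * cos t := by
  rwa [tan_eq_sin_div_cos, div_eq_iff hc] at h

lemma cos_mul_sqrt_one_add_sq_of_tan_eq_self {t : ℝ} (hc : cos t < 0) (h : tan t = t) :
    cos t * √(1 + t ^ 2) = -1 := by
  have hs := sin_eq_mul_cos_of_tan_eq_self hc.ne h
  have hr : √(1 + t ^ 2) ^ 2 = 1 + t ^ 2 := sq_sqrt (by positivity)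
  have hsq : (cos t * √(1 + t ^ 2)) ^ 2 = 1 := by
    linear_combination cos t ^ 2 * hr + sin_sq_add_cos_sq t - (sin t + t * cos t) * hs
  have hneg : cos t * √(1 + t ^ 2) < 0 :=
    mul_neg_of_neg_of_pos hc (sqrt_pos.2 (by positivity))
  nlinarith

lemma inv_cos_of_tan_eq_self {t : ℝ} (hc : cos t < 0) (h : tan t = t) :
    (cos t)⁻¹ = -√(1 + t ^ 2) := by
  rw [inv_eq_of_mul_eq_one_right (b := -√(1 + t ^ 2))]
  linear_combination -cos_mul_sqrt_one_add_sq_of_tan_eq_self hc h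

lemma cos_mul_eq_one_and_sin_mul_eq_self_iff {t a : ℝ} (ha : a < 1) :
    cos t * a = 1 ∧ sin t * a = t ↔ cos t < 0 ∧ tan t = t ∧ a = -√(1 + t ^ 2) := by
  constructor
  · rintro ⟨hca, hsa⟩
    have ha_sq : a ^ 2 = 1 + t ^ 2 := by
      linear_combination (cos t * a + 1) * hca + (sin t * a + t) * hsa - a ^ 2 * sin_sq_add_cos_sq t
    have ha_neg : a < 0 := by nlinarith
    refine ⟨?_, ?_, ?_⟩
    · nlinarith
    · have hc : cos t ≠ 0 := left_ne_zero_of_mul_eq_one hca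
      rw [tan_eq_sin_div_cos, div_eq_iff hc]
      linear_combination cos t * hsa - sin t * hca
    · rw [← ha_sq, sqrt_sq_eq_abs, abs_of_neg ha_neg, neg_neg]
  · rintro ⟨hc, htan, rfl⟩
    have hcr := cos_mul_sqrt_one_add_sq_of_tan_eq_self hc htan
    rw [sin_eq_mul_cos_of_tan_eq_self hc.ne htan]
    constructor
    · linear_combination -hcr
    · linear_combination -t * hcr

lemma sq_div_one_add_sqrt_one_add_sq (t : ℝ) :
    t ^ 2 / (1 + √(1 + t ^ 2)) = √(1 + t ^ 2) - 1 := by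
  have hr : √(1 + t ^ 2) ^ 2 = 1 + t ^ 2 := sq_sqrt (by positivity)
  rw [div_eq_iff (by positivity)]
  linear_combination -hr

lemma one_sub_sq_div_sq_eq_neg_sqrt_iff {κ : ℝ} (hκ : κ ≠ 0) (t : ℝ) :
    1 - t ^ 2 / κ ^ 2 = -√(1 + t ^ 2) ↔ κ ^ 2 = √(1 + t ^ 2) - 1 := by
  rw [← sq_div_one_add_sqrt_one_add_sq, eq_div_iff (by positivity)]
  constructor <;> intro h
  · field_simp at h
    linear_combination h
  · field_simp
    linear_combination h

end Real

namespace Complex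

lemma exp_mul_I_mul_ofReal_eq_one_add_mul_I_iff (t a : ℝ) :
    exp (t * I) * a = 1 + t * I ↔ Real.cos t * a = 1 ∧ Real.sin t * a = t := by
  rw [exp_mul_I, ← ofReal_cos, ← ofReal_sin, Complex.ext_iff]
  simp [cos_ofReal_re, sin_ofReal_re]

end Complex

/-- Characterization of the purely imaginary roots of `Q(z;κ)`. -/
theorem Q_imaginary_roots (κ t : ℝ) (hκ : 0 < κ) (ht : t ≠ 0)
    (Q : ℂ → ℂ)
    (hQ : ∀ z : ℂ, Q z = Complex.exp z * (1 + z ^ 2 / (κ : ℂ) ^ 2) - (1 + z)) :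
    Q ((t : ℂ) * Complex.I) = 0 ↔
      (Real.cos t < 0 ∧ Real.tan t = t ∧
        κ ^ 2 = t ^ 2 / (1 - (Real.cos t)⁻¹) ∧
        κ ^ 2 = Real.sqrt (1 + t ^ 2) - 1) := by
  have ha : 1 - t ^ 2 / κ ^ 2 < 1 := by
    have : 0 < t ^ 2 / κ ^ 2 := by positivity
    linarith
  have hQt : Q (t * Complex.I) =
      Complex.exp (t * Complex.I) * ((1 - t ^ 2 / κ ^ 2 : ℝ) : ℂ) - (1 + t * Complex.I) := by
    rw [hQ, mul_pow, Complex.I_sq]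
    push_cast
    ring
  rw [hQt, sub_eq_zero, Complex.exp_mul_I_mul_ofReal_eq_one_add_mul_I_iff,
    cos_mul_eq_one_and_sin_mul_eq_self_iff ha, one_sub_sq_div_sq_eq_neg_sqrt_iff hκ.ne']
  constructor
  · rintro ⟨hc, htan, hκ_sq⟩
    refine ⟨hc, htan, ?_, hκ_sq⟩
    rw [inv_cos_of_tan_eq_self hc htan, sub_neg_eq_add, sq_div_one_add_sqrt_one_add_sq, hκ_sq]
  · rintro ⟨hc, htan, -, hκ_sq⟩
    exact ⟨hc, htan, hκ_sq⟩
end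

section
/- There exists κ₀ > 0 such that for all κ ∈ (0, κ₀), the function Q(z; κ) = e^z (1 + z²/κ²) - (1 + z) has no roots z with Re z > 0. Specifically, any root with Re z > 0 and κ ∈ (0,1) satisfies |z| < 2κ, and then κ² Q = z²(1 + O(κ)) cannot vanish for small κ. -/
/-!
Clearing the denominator, a root satisfies `exp z * (κ² + z²) = κ² * (1 + z)`. Since `‖exp z‖ ≥ 1`
when `Re z ≥ 0`, taking norms gives `‖z‖² ≤ κ² (2 + ‖z‖)`, which forces `‖z‖ ≤ 1` once `κ ≤ 1/2`.
For such small `z` the equation reads `z² exp z = -κ² (exp z - 1 - z)`, and the Taylor bound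
`‖exp z - 1 - z‖ ≤ ‖z‖²` yields `exp (Re z) ≤ κ² < 1`, contradicting `Re z > 0`.
-/

namespace Complex

variable {c z : ℂ}

theorem exp_mul_add_sq_eq_of_exp_mul_one_add_div_sub_eq_zero (hc : c ≠ 0)
    (h : exp z * (1 + z ^ 2 / c) - (1 + z) = 0) : exp z * (c + z ^ 2) = c * (1 + z) := by
  field_simp at h
  linear_combination h

theorem norm_sq_le_of_exp_mul_add_sq_eq (hz : 0 ≤ z.re)
    (h : exp z * (c + z ^ 2) = c * (1 + z)) : ‖z‖ ^ 2 ≤ ‖c‖ * (2 + ‖z‖) :=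
  have hexp : 1 ≤ Real.exp z.re := Real.one_le_exp hz
  calc ‖z‖ ^ 2 = ‖c + z ^ 2 - c‖ := by rw [add_sub_cancel_left, norm_pow]
    _ ≤ ‖c + z ^ 2‖ + ‖c‖ := norm_sub_le _ _
    _ ≤ Real.exp z.re * ‖c + z ^ 2‖ + ‖c‖ := by gcongr; exact le_mul_of_one_le_left (by positivity) hexp
    _ = ‖c‖ * ‖1 + z‖ + ‖c‖ := by rw [← norm_exp, ← norm_mul, h, norm_mul]
    _ ≤ ‖c‖ * (2 + ‖z‖) := by
        nlinarith [norm_nonneg c, norm_add_le (1 : ℂ) z, norm_one (α := ℂ)]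

theorem exp_re_le_norm_of_exp_mul_add_sq_eq (hz₀ : z ≠ 0) (hz₁ : ‖z‖ ≤ 1)
    (h : exp z * (c + z ^ 2) = c * (1 + z)) : Real.exp z.re ≤ ‖c‖ := by
  have hsq : z ^ 2 * exp z = -(c * (exp z - 1 - z)) := by linear_combination h
  have hnorm : ‖z‖ ^ 2 * Real.exp z.re ≤ ‖z‖ ^ 2 * ‖c‖ :=
    calc ‖z‖ ^ 2 * Real.exp z.re = ‖c‖ * ‖exp z - 1 - z‖ := by
          rw [← norm_exp, ← norm_pow, ← norm_mul, hsq, norm_neg, norm_mul]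
      _ ≤ ‖c‖ * ‖z‖ ^ 2 := by gcongr; exact norm_exp_sub_one_sub_id_le hz₁
      _ = ‖z‖ ^ 2 * ‖c‖ := mul_comm _ _
  exact le_of_mul_le_mul_left hnorm (by positivity)

end Complex

/-- For all sufficiently small `κ > 0`, `Q(z;κ)` has no roots with `Re z > 0`. -/
theorem Q_no_unstable_roots_small_kappa :
    ∃ κ₀ : ℝ, 0 < κ₀ ∧ ∀ κ : ℝ, 0 < κ → κ < κ₀ → ∀ z : ℂ, 0 < z.re →
      Complex.exp z * (1 + z ^ 2 / (κ : ℂ) ^ 2) - (1 + z) ≠ 0 := by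
  refine ⟨1 / 2, by norm_num, fun κ hκ hκ₀ z hz hQ => ?_⟩
  have hc : ‖(κ : ℂ) ^ 2‖ = κ ^ 2 := by simp [sq_abs]
  have h := Complex.exp_mul_add_sq_eq_of_exp_mul_one_add_div_sub_eq_zero (by simp [hκ.ne']) hQ
  have hz₀ : z ≠ 0 := by rintro rfl; simp at hz
  have hκsq : κ ^ 2 < 1 / 4 := by nlinarith
  have hz₁ : ‖z‖ ≤ 1 := by
    have := Complex.norm_sq_le_of_exp_mul_add_sq_eq hz.le h
    rw [hc] at this
    nlinarith [mul_le_mul_of_nonneg_right hκsq.le (by positivity : (0 : ℝ) ≤ 2 + ‖z‖)]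
  have hexp := Complex.exp_re_le_norm_of_exp_mul_add_sq_eq hz₀ hz₁ h
  rw [hc] at hexp
  linarith [Real.one_lt_exp_iff.mpr hz]
end

section
/- For κ ∈ (0,1), any root z of Q(z; κ) = e^z (1 + z²/κ²) - (1 + z) with Re z > 0 satisfies |z| < 2κ. -/
/-!
Writing `w = z² / κ²`, the equation reads `1 + w = (1 + z) e^{-z}`. For `Re z > 0` the right side
has modulus `< 1 + |z|`, so `|z|² / κ² = |w| ≤ |1 + w| + 1 < 2 + |z|`, i.e. `|z|² < κ² (2 + |z|)`.
At `|z| = 2κ` this quadratic inequality fails by `2κ²(1 - κ) > 0`, and it keeps failing beyond.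
-/

namespace Complex

theorem norm_lt_one_add_norm_of_exp_mul_eq {z u : ℂ} (hz : 0 < z.re)
    (h : exp z * u = 1 + z) : ‖u‖ < 1 + ‖z‖ := by
  have hu : u = (1 + z) * exp (-z) := by
    rw [← h, mul_comm, ← mul_assoc, ← exp_add, neg_add_cancel, exp_zero, one_mul]
  have hdecay : Real.exp (-z.re) < 1 := Real.exp_lt_one_iff.mpr (by linarith)
  calc ‖u‖ = ‖1 + z‖ * Real.exp (-z.re) := by rw [hu, norm_mul, norm_exp, neg_re]
    _ ≤ (1 + ‖z‖) * Real.exp (-z.re) := by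
      gcongr
      simpa using norm_add_le (1 : ℂ) z
    _ < 1 + ‖z‖ := mul_lt_of_lt_one_right (by positivity) hdecay

end Complex

theorem lt_two_mul_of_sq_lt_sq_mul_two_add {κ r : ℝ} (hκ0 : 0 < κ) (hκ1 : κ < 1)
    (h : r ^ 2 < κ ^ 2 * (2 + r)) : r < 2 * κ := by
  by_contra! hr
  nlinarith [mul_nonneg (sub_nonneg.mpr hr) (sub_pos.mpr hκ1).le, mul_pos hκ0 hκ0]

/-- For `κ ∈ (0,1)`, any root of `Q(z;κ)` with `Re z > 0` satisfies `|z| < 2κ`. -/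
theorem Q_root_bound (κ : ℝ) (hκ0 : 0 < κ) (hκ1 : κ < 1) (z : ℂ)
    (hz : 0 < z.re)
    (hQ : Complex.exp z * (1 + z ^ 2 / (κ : ℂ) ^ 2) - (1 + z) = 0) :
    ‖z‖ < 2 * κ := by
  have hupper : ‖1 + z ^ 2 / (κ : ℂ) ^ 2‖ < 1 + ‖z‖ :=
    Complex.norm_lt_one_add_norm_of_exp_mul_eq hz (sub_eq_zero.mp hQ)
  have hnorm : ‖z ^ 2 / (κ : ℂ) ^ 2‖ = ‖z‖ ^ 2 / κ ^ 2 := by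
    rw [norm_div, norm_pow, norm_pow, Complex.norm_real, Real.norm_of_nonneg hκ0.le]
  have hlower : ‖z‖ ^ 2 / κ ^ 2 ≤ ‖1 + z ^ 2 / (κ : ℂ) ^ 2‖ + 1 := by
    have := norm_sub_le (1 + z ^ 2 / (κ : ℂ) ^ 2) 1
    rwa [add_sub_cancel_left, norm_one, hnorm] at this
  have hquot : ‖z‖ ^ 2 / κ ^ 2 < 2 + ‖z‖ := by linarith
  rw [div_lt_iff₀ (by positivity), mul_comm] at hquot
  exact lt_two_mul_of_sq_lt_sq_mul_two_add hκ0 hκ1 hquot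
end

section
/- Suppose Q(z; κ) = 0 with z = x + iy in the open first quadrant (x > 0, y > 0) and y² > κ² > 0, and regard z as a function of w = κ² via the implicit relation w = z²/((1+z)e^{-z} - 1). Then the quantity 2 z̄ |1+z|² + w(z̄ + z̄²) + z|z|² + |z|⁴, which equals (|z|²|1+z|²/w)(dz/dw)^{-1}, has negative imaginary part and real part larger than y⁴ - w y² > 0; consequently Re(dz/dκ) > 0 and Im(dz/dκ) > 0. -/
/-!
Factoring out `z̄ (1 + z̄)` gives `E = z̄ (1 + z̄) (w + z² + 2 + 2z)`, and for `z = x + iy`, `w = κ²`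
the real and imaginary parts of `E` are explicit polynomials whose signs are evident
(`Im E = -y (2 + 4x + x² + y² + κ² (1 + 2x))`). Differentiating `Q(g(s); s) = 0` at `s = κ` and
eliminating `e^z` by `Q(z; κ) = 0` yields `κ g' (κ² + z² + 2 + 2z) = 2z(1+z)`, so
`E · κ g' = 2 |z|² |1+z|² > 0`. Thus `κ g'` is a positive multiple of `Ē`, which lies in the
open first quadrant because `Re E > y⁴ - κ² y² > 0` and `Im E < 0`.
-/

open Complex ComplexConjugate

noncomputable def Q (z κ : ℂ) : ℂ := exp z * (1 + z ^ 2 / κ ^ 2) - (1 + z)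

noncomputable def crossingQuantity (z w : ℂ) : ℂ :=
  2 * conj z * (‖1 + z‖ : ℂ) ^ 2 + w * (conj z + conj z ^ 2) + z * (‖z‖ : ℂ) ^ 2 + (‖z‖ : ℂ) ^ 4

theorem crossingQuantity_eq_mul (z w : ℂ) :
    crossingQuantity z w = conj z * (1 + conj z) * (w + z ^ 2 + 2 + 2 * z) := by
  have hz : (‖z‖ : ℂ) ^ 2 = z * conj z := by rw [← ofReal_pow, Complex.sq_norm, mul_conj]
  have h1z : (‖1 + z‖ : ℂ) ^ 2 = (1 + z) * (1 + conj z) := by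
    rw [← ofReal_pow, Complex.sq_norm, ← mul_conj, map_add, map_one]
  have hz4 : (‖z‖ : ℂ) ^ 4 = (z * conj z) ^ 2 := by rw [← hz]; ring
  rw [crossingQuantity, hz, h1z, hz4]
  ring

theorem crossingQuantity_re (x y t : ℝ) :
    (crossingQuantity (x + y * I) t).re =
      2 * x * ((1 + x) ^ 2 + y ^ 2) + t * (x + x ^ 2 - y ^ 2) + x * (x ^ 2 + y ^ 2)
        + (x ^ 2 + y ^ 2) ^ 2 := by
  rw [crossingQuantity_eq_mul]
  simp only [pow_two, map_add, map_mul, conj_ofReal, conj_I, mul_re, mul_im, add_re, add_im,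
    ofReal_re, ofReal_im, I_re, I_im, one_re, one_im, neg_re, neg_im, re_ofNat, im_ofNat]
  ring

theorem crossingQuantity_im (x y t : ℝ) :
    (crossingQuantity (x + y * I) t).im =
      -y * (2 + 4 * x + x ^ 2 + y ^ 2 + t * (1 + 2 * x)) := by
  rw [crossingQuantity_eq_mul]
  simp only [pow_two, map_add, map_mul, conj_ofReal, conj_I, mul_re, mul_im, add_re, add_im,
    ofReal_re, ofReal_im, I_re, I_im, one_re, one_im, neg_re, neg_im, re_ofNat, im_ofNat]
  ring

theorem crossingQuantity_im_neg {x y t : ℝ} (hx : 0 ≤ x) (hy : 0 < y) (ht : 0 ≤ t) :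
    (crossingQuantity (x + y * I) t).im < 0 := by
  rw [crossingQuantity_im, neg_mul]
  exact neg_neg_of_pos (mul_pos hy (by positivity))

theorem crossingQuantity_re_gt {x y t : ℝ} (hx : 0 < x) (ht : 0 ≤ t) :
    y ^ 4 - t * y ^ 2 < (crossingQuantity (x + y * I) t).re := by
  rw [crossingQuantity_re]
  nlinarith [mul_nonneg ht (add_pos hx (pow_pos hx 2)).le, mul_pos hx (add_pos hx (pow_pos hx 2)),
    pow_pos hx 4, mul_nonneg (sq_nonneg x) (sq_nonneg y), mul_nonneg hx.le (sq_nonneg y)]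

theorem crossingQuantity_mul_eq {z w d : ℂ} (h : d * (w + z ^ 2 + 2 + 2 * z) = 2 * z * (1 + z)) :
    crossingQuantity z w * d = (2 * normSq z * normSq (1 + z) : ℝ) := by
  rw [crossingQuantity_eq_mul]
  push_cast
  rw [← mul_conj, ← mul_conj, map_add, map_one]
  linear_combination conj z * (1 + conj z) * h

theorem hasDerivAt_Q_comp {g : ℝ → ℂ} {g' : ℂ} {κ : ℝ} (hκ : κ ≠ 0) (hg : HasDerivAt g g' κ) :
    HasDerivAt (fun s : ℝ => Q (g s) s)
      ((exp (g κ) * (1 + (g κ ^ 2 + 2 * g κ) / (κ : ℂ) ^ 2) - 1) * g'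
        - 2 * exp (g κ) * g κ ^ 2 / (κ : ℂ) ^ 3) κ := by
  have hκ' : (κ : ℂ) ≠ 0 := ofReal_ne_zero.mpr hκ
  have hsq : HasDerivAt (fun s : ℝ => (s : ℂ) ^ 2) (2 * (κ : ℂ)) κ := by
    convert (hasDerivAt_pow 2 κ).ofReal_comp using 1
    · ext s; push_cast; rfl
    · push_cast; ring
  have hderiv : HasDerivAt (fun s : ℝ => Q (g s) s) _ κ :=
    (hg.cexp.mul ((hasDerivAt_const κ (1 : ℂ)).add ((hg.pow 2).div hsq (pow_ne_zero 2 hκ')))).sub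
      ((hasDerivAt_const κ (1 : ℂ)).add hg)
  refine hderiv.congr_deriv ?_
  simp only [Pi.add_apply, Pi.div_apply, Pi.pow_apply]
  field_simp
  ring

/-- The paper's `(z/w) (dz/dw)⁻¹ = 2 + (w + z²)/(1 + z)` with `w = κ²`, so that `κ g' = 2w dz/dw`,
cleared of denominators. -/
theorem mul_deriv_eq_of_Q_eq_zero {z κ g' : ℂ} (hκ : κ ≠ 0) (hz : z ≠ 0) (hQ : Q z κ = 0)
    (hD : (exp z * (1 + (z ^ 2 + 2 * z) / κ ^ 2) - 1) * g' - 2 * exp z * z ^ 2 / κ ^ 3 = 0) :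
    κ * g' * (κ ^ 2 + z ^ 2 + 2 + 2 * z) = 2 * z * (1 + z) := by
  have hQ' : exp z * (κ ^ 2 + z ^ 2) = (1 + z) * κ ^ 2 := by
    rw [Q] at hQ
    field_simp at hQ
    linear_combination hQ
  field_simp at hD
  refine mul_left_cancel₀ (mul_ne_zero (pow_ne_zero 2 hκ) hz) ?_
  linear_combination (κ ^ 2 + z ^ 2) * hD - (g' * κ * (κ ^ 2 + z ^ 2 + 2 * z) - 2 * z ^ 2) * hQ'

theorem re_pos_iff_of_mul_eq_ofReal {E u : ℂ} {c : ℝ} (hc : 0 < c) (h : E * u = c) :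
    0 < u.re ↔ 0 < E.re := by
  have hE : E ≠ 0 := left_ne_zero_of_mul (h ▸ ofReal_ne_zero.mpr hc.ne')
  rw [eq_div_of_mul_eq hE ((mul_comm u E).trans h), div_eq_mul_inv, re_ofReal_mul, inv_re,
    mul_pos_iff_of_pos_left hc, div_pos_iff_of_pos_right (normSq_pos.mpr hE)]

theorem im_pos_iff_of_mul_eq_ofReal {E u : ℂ} {c : ℝ} (hc : 0 < c) (h : E * u = c) :
    0 < u.im ↔ E.im < 0 := by
  have hE : E ≠ 0 := left_ne_zero_of_mul (h ▸ ofReal_ne_zero.mpr hc.ne')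
  rw [eq_div_of_mul_eq hE ((mul_comm u E).trans h), div_eq_mul_inv, im_ofReal_mul, inv_im,
    mul_pos_iff_of_pos_left hc, neg_div, neg_pos, div_lt_iff₀ (normSq_pos.mpr hE), zero_mul]

/-- Transversal crossing: at a root of `Q` in the open first quadrant with
`y² > κ²`, the quantity `2 z̄|1+z|² + w(z̄ + z̄²) + z|z|² + |z|⁴` (which equals
`(|z|²|1+z|²/w)(dz/dw)⁻¹`) has negative imaginary part and real part larger
than `y⁴ - w y² > 0`; consequently `Re(dz/dκ) > 0` and `Im(dz/dκ) > 0`. -/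
theorem Q_transversal_crossing (κ x y : ℝ) (hκ : 0 < κ) (hx : 0 < x) (hy : 0 < y)
    (hyk : κ ^ 2 < y ^ 2)
    (z w : ℂ) (hz : z = (x : ℂ) + (y : ℂ) * Complex.I) (hw : w = (κ : ℂ) ^ 2)
    (hQ : Complex.exp z * (1 + z ^ 2 / (κ : ℂ) ^ 2) - (1 + z) = 0)
    (E : ℂ)
    (hE : E = 2 * (starRingEnd ℂ) z * ((‖1 + z‖ : ℂ)) ^ 2
        + w * ((starRingEnd ℂ) z + ((starRingEnd ℂ) z) ^ 2)
        + z * ((‖z‖ : ℂ)) ^ 2 + ((‖z‖ : ℂ)) ^ 4) :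
    E.im < 0 ∧ y ^ 4 - κ ^ 2 * y ^ 2 < E.re ∧ 0 < y ^ 4 - κ ^ 2 * y ^ 2 ∧
    ∀ (g : ℝ → ℂ) (g' : ℂ), HasDerivAt g g' κ → g κ = z →
      (∀ᶠ s in nhds κ,
        Complex.exp (g s) * (1 + (g s) ^ 2 / (s : ℂ) ^ 2) - (1 + g s) = 0) →
      0 < g'.re ∧ 0 < g'.im := by
  have hEq : E = crossingQuantity z ((κ ^ 2 : ℝ) : ℂ) := by rw [hE, hw, ofReal_pow]; rfl
  subst hz hEq
  have him := crossingQuantity_im_neg hx.le hy (sq_nonneg κ)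
  have hre := crossingQuantity_re_gt (y := y) hx (sq_nonneg κ)
  have hgap : 0 < y ^ 4 - κ ^ 2 * y ^ 2 := by nlinarith [pow_pos hy 2]
  refine ⟨him, hre, hgap, fun g g' hg hgz hev => ?_⟩
  have hz0 : (x + y * I : ℂ) ≠ 0 := ne_of_apply_ne re (by simpa using hx.ne')
  have h1z : 1 + (x + y * I : ℂ) ≠ 0 := ne_of_apply_ne re (by simpa using (add_pos one_pos hx).ne')
  have hD := (hasDerivAt_Q_comp hκ.ne' hg).unique
    ((hasDerivAt_const κ (0 : ℂ)).congr_of_eventuallyEq hev)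
  rw [hgz] at hD
  have hprod := crossingQuantity_mul_eq
    (mul_deriv_eq_of_Q_eq_zero (ofReal_ne_zero.mpr hκ.ne') hz0 hQ hD)
  rw [← ofReal_pow] at hprod
  have hc : 0 < 2 * normSq (x + y * I) * normSq (1 + (x + y * I)) := by
    have := normSq_pos.mpr hz0; have := normSq_pos.mpr h1z; positivity
  have hre' := (re_pos_iff_of_mul_eq_ofReal hc hprod).mpr (hgap.trans hre)
  have him' := (im_pos_iff_of_mul_eq_ofReal hc hprod).mpr him
  rw [re_ofReal_mul] at hre'
  rw [im_ofReal_mul] at him'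
  exact ⟨pos_of_mul_pos_right hre' hκ.le, pos_of_mul_pos_right him' hκ.le⟩
end

section
/- For the polynomial F₀(φ) = φ^M P₂(φ) - P₁(φ), the point φ = 1 is a root of multiplicity at least 2: F₀(1) = 0 and F₀'(1) = 0, using P₁(1) = P₂(1) = K³, P₁'(1) = MK³ + K²(3+4K), and P₂'(1) = K²(3+4K). Moreover F₀''(1) = M(M+1)K³ + 2A²(KM - 1), which is nonzero when KM ≥ 1, so φ = 1 is exactly a double root in that case. -/
/-!
P₁ and P₂ agree to first order at 1: both take the value K³ there, and P₁'(1) - P₂'(1) = MK³ is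
exactly the extra term that the Leibniz rule produces in `(φ^M P₂)'(1) = M P₂(1) + P₂'(1)`. So
F₀(1) = F₀'(1) = 0. For the second derivative, `(φ^M P₂)''(1) = M(M-1)P₂(1) + 2M P₂'(1) + P₂''(1)`
together with P₁''(1) = 6AK(KM + 2K + 1) and P₂''(1) = 2A²(KM + 3K - 1) + 6AK² gives the stated
value. If KM ≥ 1 then K > 0 and M > 0, so that value is positive.
-/

open Polynomial

protected theorem Polynomial.iteratedDeriv {𝕜 : Type*} [NontriviallyNormedField 𝕜] (p : 𝕜[X])
    (n : ℕ) (x : 𝕜) : iteratedDeriv n (fun x => p.eval x) x = (derivative^[n] p).eval x := by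
  induction n generalizing x with
  | zero => rfl
  | succ n ih =>
    have h : iteratedDeriv n (fun x => p.eval x) = fun x => (derivative^[n] p).eval x :=
      _root_.funext ih
    rw [iteratedDeriv_succ, h, Function.iterate_succ_apply']
    exact Polynomial.deriv _

section

variable {R : Type*} [CommRing R]

theorem Polynomial.eval_one_derivative_X_pow_mul (M : ℕ) (q : R[X]) :
    (derivative (X ^ M * q)).eval 1 = M * q.eval 1 + (derivative q).eval 1 := by
  simp [derivative_mul, derivative_X_pow]

theorem Polynomial.eval_one_derivative_derivative_X_pow_mul (M : ℕ) (q : R[X]) :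
    (derivative (derivative (X ^ M * q))).eval 1
      = M * (M - 1) * q.eval 1 + 2 * M * (derivative q).eval 1
        + (derivative (derivative q)).eval 1 := by
  rcases M with _ | M
  · simp
  · simp only [derivative_mul, derivative_add, derivative_X_pow, derivative_C, eval_add, eval_mul,
      eval_C, eval_pow, eval_X, eval_zero, one_pow, Nat.add_sub_cancel]
    push_cast
    ring

variable (K A : R) (M : ℕ)

noncomputable def polyP₁ : R[X] :=
  C K * ((C A * X - 1) ^ 2 * X ^ 2 - (X - 1) ^ 2)
    + C (K * M + 1) * (X - 1) * (C A * X - 1) * (C A * X ^ 2 - 1)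

noncomputable def polyP₂ : R[X] :=
  X * (C A * X - 1) ^ 3 - C (A ^ 2) * (X - 1) ^ 2
    + C (M : R) * (C A * X - 1) * C (A ^ 2) * (X - 1) ^ 2

variable {K A}

theorem polyP₁_eval_one (hA : A = 1 + K) : (polyP₁ K A M).eval 1 = K ^ 3 := by
  subst hA
  simp only [polyP₁, eval_add, eval_sub, eval_mul, eval_pow, eval_C, eval_X, eval_one]
  ring

theorem polyP₂_eval_one (hA : A = 1 + K) : (polyP₂ A M).eval 1 = K ^ 3 := by
  subst hA
  simp only [polyP₂, eval_add, eval_sub, eval_mul, eval_pow, eval_C, eval_X, eval_one]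
  ring

theorem polyP₁_derivative_eval_one (hA : A = 1 + K) :
    (derivative (polyP₁ K A M)).eval 1 = M * K ^ 3 + K ^ 2 * (3 + 4 * K) := by
  subst hA
  simp only [polyP₁, derivative_add, derivative_sub, derivative_mul, derivative_pow, derivative_C,
    derivative_X, derivative_one, eval_add, eval_sub, eval_mul, eval_pow, eval_C, eval_X, eval_one,
    eval_zero]
  ring

theorem polyP₂_derivative_eval_one (hA : A = 1 + K) :
    (derivative (polyP₂ A M)).eval 1 = K ^ 2 * (3 + 4 * K) := by
  subst hA
  simp only [polyP₂, derivative_add, derivative_sub, derivative_mul, derivative_pow, derivative_C,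
    derivative_X, derivative_one, eval_add, eval_sub, eval_mul, eval_pow, eval_C, eval_X, eval_one,
    eval_zero]
  ring

theorem polyP₁_derivative_derivative_eval_one (hA : A = 1 + K) :
    (derivative (derivative (polyP₁ K A M))).eval 1 = 6 * A * K * (K * M + 2 * K + 1) := by
  subst hA
  simp only [polyP₁, derivative_add, derivative_sub, derivative_mul, derivative_pow, derivative_C,
    derivative_X, derivative_one, derivative_zero, eval_add, eval_sub, eval_mul, eval_pow, eval_C,
    eval_X, eval_one, eval_zero]
  ring

theorem polyP₂_derivative_derivative_eval_one (hA : A = 1 + K) :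
    (derivative (derivative (polyP₂ A M))).eval 1
      = 2 * A ^ 2 * (K * M + 3 * K - 1) + 6 * A * K ^ 2 := by
  subst hA
  simp only [polyP₂, derivative_add, derivative_sub, derivative_mul, derivative_pow, derivative_C,
    derivative_X, derivative_one, derivative_zero, eval_add, eval_sub, eval_mul, eval_pow, eval_C,
    eval_X, eval_one, eval_zero]
  ring

end

theorem F0_double_root_at_one_general (K A : ℝ) (hA : A = 1 + K)
    (M : ℕ)
    (P₁ P₂ F₀ : ℝ → ℝ)
    (hP₁ : ∀ φ : ℝ, P₁ φ = K * ((A * φ - 1) ^ 2 * φ ^ 2 - (φ - 1) ^ 2)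
        + (K * M + 1) * (φ - 1) * (A * φ - 1) * (A * φ ^ 2 - 1))
    (hP₂ : ∀ φ : ℝ, P₂ φ = φ * (A * φ - 1) ^ 3 - A ^ 2 * (φ - 1) ^ 2
        + M * (A * φ - 1) * A ^ 2 * (φ - 1) ^ 2)
    (hF₀ : ∀ φ : ℝ, F₀ φ = φ ^ M * P₂ φ - P₁ φ) :
    P₁ 1 = K ^ 3 ∧ P₂ 1 = K ^ 3 ∧
    deriv P₁ 1 = M * K ^ 3 + K ^ 2 * (3 + 4 * K) ∧
    deriv P₂ 1 = K ^ 2 * (3 + 4 * K) ∧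
    F₀ 1 = 0 ∧ deriv F₀ 1 = 0 ∧
    iteratedDeriv 2 F₀ 1 = M * (M + 1) * K ^ 3 + 2 * A ^ 2 * (K * M - 1) ∧
    (1 ≤ K * M → iteratedDeriv 2 F₀ 1 ≠ 0) := by
  have hP₁_eq : P₁ = fun φ => (polyP₁ K A M).eval φ := by funext φ; simp [hP₁, polyP₁]
  have hP₂_eq : P₂ = fun φ => (polyP₂ A M).eval φ := by funext φ; simp [hP₂, polyP₂]
  have hF₀_eq : F₀ = fun φ => (X ^ M * polyP₂ A M - polyP₁ K A M).eval φ := by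
    funext φ; simp [hF₀, hP₁_eq, hP₂_eq]
  have hF₀'' : iteratedDeriv 2 F₀ 1 = M * (M + 1) * K ^ 3 + 2 * A ^ 2 * (K * M - 1) := by
    rw [hF₀_eq, Polynomial.iteratedDeriv, Function.iterate_succ_apply', Function.iterate_one,
      derivative_sub, derivative_sub, eval_sub, eval_one_derivative_derivative_X_pow_mul,
      polyP₂_eval_one M hA, polyP₂_derivative_eval_one M hA,
      polyP₂_derivative_derivative_eval_one M hA, polyP₁_derivative_derivative_eval_one M hA, hA]
    ring
  refine ⟨?_, ?_, ?_, ?_, ?_, ?_, hF₀'', fun hKM => ?_⟩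
  · rw [hP₁_eq]; exact polyP₁_eval_one M hA
  · rw [hP₂_eq]; exact polyP₂_eval_one M hA
  · rw [hP₁_eq, Polynomial.deriv]; exact polyP₁_derivative_eval_one M hA
  · rw [hP₂_eq, Polynomial.deriv]; exact polyP₂_derivative_eval_one M hA
  · rw [hF₀, hP₁_eq, hP₂_eq]
    simp only [one_pow, one_mul, polyP₁_eval_one M hA, polyP₂_eval_one M hA, sub_self]
  · rw [hF₀_eq, Polynomial.deriv, derivative_sub, eval_sub, eval_one_derivative_X_pow_mul,
      polyP₂_eval_one M hA, polyP₂_derivative_eval_one M hA, polyP₁_derivative_eval_one M hA]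
    ring
  · have hM : 0 < (M : ℝ) := Nat.cast_pos.2 <| Nat.pos_of_ne_zero fun h => by norm_num [h] at hKM
    have hK : 0 < K := by nlinarith
    have hKM' : 0 ≤ K * M - 1 := sub_nonneg.2 hKM
    rw [hF₀'']
    positivity

/-- `φ = 1` is a double root of `F₀ = φ^M P₂ - P₁` when `KM ≥ 1`. -/
theorem F0_double_root_at_one (K A : ℝ) (hK : 0 < K) (hA : A = 1 + K)
    (M : ℕ) (hM : 3 ≤ M)
    (P₁ P₂ F₀ : ℝ → ℝ)
    (hP₁ : ∀ φ : ℝ, P₁ φ = K * ((A * φ - 1) ^ 2 * φ ^ 2 - (φ - 1) ^ 2)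
        + (K * M + 1) * (φ - 1) * (A * φ - 1) * (A * φ ^ 2 - 1))
    (hP₂ : ∀ φ : ℝ, P₂ φ = φ * (A * φ - 1) ^ 3 - A ^ 2 * (φ - 1) ^ 2
        + M * (A * φ - 1) * A ^ 2 * (φ - 1) ^ 2)
    (hF₀ : ∀ φ : ℝ, F₀ φ = φ ^ M * P₂ φ - P₁ φ) :
    P₁ 1 = K ^ 3 ∧ P₂ 1 = K ^ 3 ∧
    deriv P₁ 1 = M * K ^ 3 + K ^ 2 * (3 + 4 * K) ∧
    deriv P₂ 1 = K ^ 2 * (3 + 4 * K) ∧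
    F₀ 1 = 0 ∧ deriv F₀ 1 = 0 ∧
    iteratedDeriv 2 F₀ 1 = M * (M + 1) * K ^ 3 + 2 * A ^ 2 * (K * M - 1) ∧
    (1 ≤ K * M → iteratedDeriv 2 F₀ 1 ≠ 0) :=
  F0_double_root_at_one_general K A hA M P₁ P₂ F₀ hP₁ hP₂ hF₀
end

section
/- Pointwise convergence to Q: fix κ > 0 and z ∈ ℂ. With M → ∞, K = κ/√M, A = 1+K, and φ = 1 + z/M, one has K^{-3} F₀(1 + z/M) → Q(z; κ) = e^z(1 + z²/κ²) - (1 + z). -/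
/-!
With `s = 1/√M` one has `K = κ s`, `M = s⁻²` and `φ = 1 + z s²`, so `Aφ - 1 = s (κ + z s + κ z s²)`
and `φ - 1 = z s²`. Substituting, both `P₁` and `P₂` become `s³` times a polynomial `R₁(s)`, `R₂(s)`,
and the `s³` cancels against `K³ = κ³ s³`: `K⁻³ F₀(φ) = (φ^M R₂(s) - R₁(s)) / κ³`. Letting `s → 0`
with `φ^M → e^z`, `R₂(0) = κ³ + κ z²` and `R₁(0) = κ³ (1 + z)` gives the limit.
-/

open Filter Topology

section Polynomials

variable {𝕜 : Type*} [Field 𝕜]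

def P₁ (K M φ : 𝕜) : 𝕜 :=
  K * (((K + 1) * φ - 1) ^ 2 * φ ^ 2 - (φ - 1) ^ 2)
    + (K * M + 1) * (φ - 1) * ((K + 1) * φ - 1) * ((K + 1) * φ ^ 2 - 1)

def P₂ (K M φ : 𝕜) : 𝕜 :=
  φ * ((K + 1) * φ - 1) ^ 3 - (K + 1) ^ 2 * (φ - 1) ^ 2
    + M * ((K + 1) * φ - 1) * (K + 1) ^ 2 * (φ - 1) ^ 2

def scaledP₁ (κ z s : 𝕜) : 𝕜 :=
  κ * ((κ + z * s + κ * z * s ^ 2) ^ 2 * (1 + z * s ^ 2) ^ 2 - z ^ 2 * s ^ 2)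
    + (κ + s) * z * (κ + z * s + κ * z * s ^ 2)
      * (κ + 2 * z * s + 2 * κ * z * s ^ 2 + z ^ 2 * s ^ 3 + κ * z ^ 2 * s ^ 4)

def scaledP₂ (κ z s : 𝕜) : 𝕜 :=
  (1 + z * s ^ 2) * (κ + z * s + κ * z * s ^ 2) ^ 3
    + (κ * s + 1) ^ 2 * z ^ 2 * (κ + (z - 1) * s + κ * z * s ^ 2)

theorem P₁_rescale (κ z : 𝕜) {s : 𝕜} (hs : s ≠ 0) :
    P₁ (κ * s) (s ^ 2)⁻¹ (1 + z * s ^ 2) = s ^ 3 * scaledP₁ κ z s := by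
  unfold P₁ scaledP₁
  field_simp
  ring

theorem P₂_rescale (κ z : 𝕜) {s : 𝕜} (hs : s ≠ 0) :
    P₂ (κ * s) (s ^ 2)⁻¹ (1 + z * s ^ 2) = s ^ 3 * scaledP₂ κ z s := by
  unfold P₂ scaledP₂
  field_simp
  ring

theorem inv_pow_mul_sub_rescale (κ z E : 𝕜) {s : 𝕜} (hs : s ≠ 0) :
    ((κ * s) ^ 3)⁻¹ * (E * P₂ (κ * s) (s ^ 2)⁻¹ (1 + z * s ^ 2) - P₁ (κ * s) (s ^ 2)⁻¹ (1 + z * s ^ 2))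
      = (E * scaledP₂ κ z s - scaledP₁ κ z s) / κ ^ 3 := by
  rw [P₁_rescale κ z hs, P₂_rescale κ z hs, mul_left_comm E, ← mul_sub, mul_pow, mul_inv,
    mul_assoc, inv_mul_cancel_left₀ (pow_ne_zero 3 hs), div_eq_inv_mul]

theorem div_pow_three_scaled_zero (z E : 𝕜) {κ : 𝕜} (hκ : κ ≠ 0) :
    (E * scaledP₂ κ z 0 - scaledP₁ κ z 0) / κ ^ 3 = E * (1 + z ^ 2 / κ ^ 2) - (1 + z) := by
  unfold scaledP₁ scaledP₂
  field_simp
  ring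

variable [TopologicalSpace 𝕜] [IsTopologicalRing 𝕜]

theorem continuous_scaledP₁ (κ z : 𝕜) : Continuous (scaledP₁ κ z) := by
  unfold scaledP₁; fun_prop

theorem continuous_scaledP₂ (κ z : 𝕜) : Continuous (scaledP₂ κ z) := by
  unfold scaledP₂; fun_prop

end Polynomials

theorem tendsto_ofReal_inv_sqrt_natCast :
    Tendsto (fun n : ℕ => (((√n)⁻¹ : ℝ) : ℂ)) atTop (𝓝 0) :=
  (Complex.continuous_ofReal.tendsto' 0 0 Complex.ofReal_zero).comp <|
    tendsto_inv_atTop_zero.comp (Real.tendsto_sqrt_atTop.comp tendsto_natCast_atTop_atTop)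

theorem inv_pow_mul_F₀_eq (κ : ℝ) (z : ℂ) {n : ℕ} (hn : n ≠ 0) :
    (((κ / √n : ℝ) : ℂ) ^ 3)⁻¹ * ((1 + z / n) ^ n * P₂ ((κ / √n : ℝ) : ℂ) n (1 + z / n)
        - P₁ ((κ / √n : ℝ) : ℂ) n (1 + z / n))
      = ((1 + z / n) ^ n * scaledP₂ (κ : ℂ) z ((√n)⁻¹ : ℝ)
        - scaledP₁ (κ : ℂ) z ((√n)⁻¹ : ℝ)) / (κ : ℂ) ^ 3 := by
  set s : ℂ := (((√n)⁻¹ : ℝ) : ℂ)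
  have hs : s ≠ 0 := by simp [s, hn]
  have hK : ((κ / √n : ℝ) : ℂ) = κ * s := by simp [s, div_eq_mul_inv]
  have hM : (n : ℂ) = (s ^ 2)⁻¹ := by simp [s, ← Complex.ofReal_pow]
  have hφ : 1 + z / n = 1 + z * s ^ 2 := by rw [hM, div_inv_eq_mul]
  rw [hK, hφ, hM]
  exact inv_pow_mul_sub_rescale _ _ _ hs

/-- Pointwise convergence `K⁻³ F₀(1 + z/M) → Q(z;κ)` as `M → ∞` with `K = κ/√M`. -/
theorem F0_converges_to_Q (κ : ℝ) (hκ : 0 < κ) (z : ℂ) :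
    Filter.Tendsto
      (fun M : ℕ =>
        (((κ / Real.sqrt M : ℝ) : ℂ) ^ 3)⁻¹ *
          ((1 + z / (M : ℂ)) ^ M *
              ((1 + z / (M : ℂ)) * ((((κ / Real.sqrt M : ℝ) : ℂ) + 1) * (1 + z / (M : ℂ)) - 1) ^ 3
                - (((κ / Real.sqrt M : ℝ) : ℂ) + 1) ^ 2 * ((1 + z / (M : ℂ)) - 1) ^ 2
                + (M : ℂ) * ((((κ / Real.sqrt M : ℝ) : ℂ) + 1) * (1 + z / (M : ℂ)) - 1)
                    * (((κ / Real.sqrt M : ℝ) : ℂ) + 1) ^ 2 * ((1 + z / (M : ℂ)) - 1) ^ 2)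
            - (((κ / Real.sqrt M : ℝ) : ℂ) *
                  (((((κ / Real.sqrt M : ℝ) : ℂ) + 1) * (1 + z / (M : ℂ)) - 1) ^ 2
                      * (1 + z / (M : ℂ)) ^ 2
                    - ((1 + z / (M : ℂ)) - 1) ^ 2)
                + (((κ / Real.sqrt M : ℝ) : ℂ) * (M : ℂ) + 1) * ((1 + z / (M : ℂ)) - 1)
                    * ((((κ / Real.sqrt M : ℝ) : ℂ) + 1) * (1 + z / (M : ℂ)) - 1)
                    * ((((κ / Real.sqrt M : ℝ) : ℂ) + 1) * (1 + z / (M : ℂ)) ^ 2 - 1))))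
      Filter.atTop
      (nhds (Complex.exp z * (1 + z ^ 2 / (κ : ℂ) ^ 2) - (1 + z))) := by
  have hκ₀ : (κ : ℂ) ≠ 0 := Complex.ofReal_ne_zero.mpr hκ.ne'
  have hcomp (R : ℂ → ℂ) (hR : Continuous R) :
      Tendsto (fun n : ℕ => R ((√n)⁻¹ : ℝ)) atTop (𝓝 (R 0)) :=
    (hR.tendsto 0).comp tendsto_ofReal_inv_sqrt_natCast
  have hlim := (((Complex.tendsto_one_add_div_pow_exp z).mul
    (hcomp _ (continuous_scaledP₂ (κ : ℂ) z))).sub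
      (hcomp _ (continuous_scaledP₁ (κ : ℂ) z))).div_const ((κ : ℂ) ^ 3)
  rw [div_pow_three_scaled_zero z _ hκ₀] at hlim
  exact hlim.congr' <| (eventually_ne_atTop 0).mono fun n hn => (inv_pow_mul_F₀_eq κ z hn).symm
end
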